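/- arXiv:1101.4615 — 11 statements merged into one kernel-verified Lean document; each statement's English description precedes it below -/
import Mathlib

section
/- Let 𝒰 be a locally finite family of non-empty open sets in a topological space X and let D be a dense subset of X. Then there exists a discrete subset A of X with A ⊆ D such that A ∩ U ≠ ∅ for every U ∈ 𝒰. (No separation axioms are assumed.) -/
/-- `A` is a discrete subset of `X`: every point of `A` has an open
neighborhood meeting `A` only in that point. -/
def IsDiscreteSet {X : Type*} [TopologicalSpace X] (A : Set X) : Prop :=
  ∀ a ∈ A, ∃ U : Set X, IsOpen U ∧ U ∩ A = {a}

theorem exists_discrete_meeting_locallyFinite_family {X : Type*} [TopologicalSpace X]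
    (𝒰 : Set (Set X)) (hopen : ∀ U ∈ 𝒰, IsOpen U) (hne : ∀ U ∈ 𝒰, U.Nonempty)
    (hlf : ∀ x : X, ∃ V ∈ nhds x, {U ∈ 𝒰 | (U ∩ V).Nonempty}.Finite)
    (D : Set X) (hD : Dense D) :
    ∃ A : Set X, A ⊆ D ∧ IsDiscreteSet A ∧ ∀ U ∈ 𝒰, (A ∩ U).Nonempty := by
  classical
  set T : X → Set (Set X) := fun x => {W ∈ 𝒰 | x ∈ W} with hTdef
  -- for each U, a "good" point a and open S ⊆ U with a of maximal type in D ∩ S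
  have spec : ∀ U : 𝒰, ∃ a : X, ∃ S : Set X,
      IsOpen S ∧ S ⊆ (U : Set X) ∧ a ∈ D ∧ a ∈ S ∧ (T a).Finite ∧
      ∀ y, y ∈ D → y ∈ S → ¬ (T a ⊂ T y) := by
    rintro ⟨U, hU⟩
    obtain ⟨x, hx⟩ := hne U hU
    obtain ⟨V, hV, hVfin⟩ := hlf x
    obtain ⟨V', hV'V, hV'open, hxV'⟩ := mem_nhds_iff.mp hV
    set S := U ∩ V' with hS
    have hSopen : IsOpen S := (hopen U hU).inter hV'open
    have hSsub : S ⊆ U := Set.inter_subset_left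
    have hSne : S.Nonempty := ⟨x, hx, hxV'⟩
    have hTsub : ∀ y ∈ S, T y ⊆ {W ∈ 𝒰 | (W ∩ V).Nonempty} := by
      rintro y hyS W ⟨hW𝒰, hyW⟩
      exact ⟨hW𝒰, y, hyW, hV'V hyS.2⟩
    have hTfin : ∀ y ∈ S, (T y).Finite := fun y hy => hVfin.subset (hTsub y hy)
    obtain ⟨y₀, hy₀S, hy₀D⟩ := hD.inter_open_nonempty S hSopen hSne
    set N : Set ℕ := {n | ∃ y, (y ∈ D ∧ y ∈ S) ∧ (T y).ncard = n} with hN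
    have hNne : N.Nonempty := ⟨(T y₀).ncard, y₀, ⟨hy₀D, hy₀S⟩, rfl⟩
    have hNbdd : BddAbove N := by
      refine ⟨{W ∈ 𝒰 | (W ∩ V).Nonempty}.ncard, ?_⟩
      rintro n ⟨y, ⟨hyD, hyS⟩, rfl⟩
      exact Set.ncard_le_ncard (hTsub y hyS) hVfin
    obtain ⟨a, ⟨haD, haS⟩, hacard⟩ := Nat.sSup_mem hNne hNbdd
    refine ⟨a, S, hSopen, hSsub, haD, haS, hTfin a haS, ?_⟩
    intro y hyD hyS hlt
    have h1 : (T a).ncard < (T y).ncard := Set.ncard_lt_ncard hlt (hTfin y hyS)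
    have h2 : (T y).ncard ≤ sSup N := le_csSup hNbdd ⟨y, ⟨hyD, hyS⟩, rfl⟩
    omega
  choose pt S hSopen hSsub hptD hptS hTfin hmax using spec
  let r : 𝒰 → 𝒰 → Prop := WellOrderingRel
  haveI : IsWellOrder 𝒰 r := WellOrderingRel.isWellOrder
  have wf : WellFounded r := (inferInstance : IsWellFounded 𝒰 r).wf
  let F : ∀ U : 𝒰, (∀ V, r V U → X) → X := fun U IH =>
    if h : ∃ V : {V // r V U}, IH V.1 V.2 ∈ (U : Set X) then IH h.choose.1 h.choose.2
    else pt U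
  let f : 𝒰 → X := wf.fix F
  have hf : ∀ U, f U = F U (fun V _ => f V) := fun U => wf.fix_eq F U
  have hmem : ∀ U : 𝒰, f U ∈ (U : Set X) ∧ f U ∈ D := by
    intro U
    refine wf.induction (C := fun U => f U ∈ (U : Set X) ∧ f U ∈ D) U ?_
    intro U IH
    rw [hf U]
    simp only [F]
    split_ifs with h
    · exact ⟨h.choose_spec, (IH h.choose.1 h.choose.2).2⟩
    · exact ⟨hSsub U (hptS U), hptD U⟩
  have fresh : ∀ α : 𝒰, (∀ V, f V = f α → ¬ r V α) →
      f α = pt α ∧ ∀ V, r V α → f V ∉ (α : Set X) := by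
    intro α hmin
    have hno : ¬ ∃ V : {V // r V α}, f V.1 ∈ (α : Set X) := by
      intro h
      have h1 : f α = f h.choose.1 := by
        rw [hf α]; simp only [F]; rw [dif_pos h]
      exact hmin h.choose.1 h1.symm h.choose.2
    constructor
    · rw [hf α]; simp only [F]; rw [dif_neg hno]
    · intro V hVα hVmem
      exact hno ⟨⟨V, hVα⟩, hVmem⟩
  refine ⟨Set.range f, ?_, ?_, ?_⟩
  · rintro _ ⟨U, rfl⟩; exact (hmem U).2
  · -- discreteness
    intro a ha
    have hZne : {U : 𝒰 | f U = a}.Nonempty := ha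
    set α := wf.min _ hZne with hα
    have hαZ : f α = a := wf.min_mem _ hZne
    have hαmin : ∀ V, f V = f α → ¬ r V α := by
      intro V hV
      exact wf.not_lt_min _ (hV.trans hαZ)
    obtain ⟨hαpt, hαnoreuse⟩ := fresh α hαmin
    have haeq : a = pt α := hαZ ▸ hαpt
    have haα : a ∈ (α : Set X) := haeq ▸ hSsub α (hptS α)
    refine ⟨S α ∩ ⋂₀ (T a), ?_, ?_⟩
    · refine (hSopen α).inter (Set.Finite.isOpen_sInter ?_ ?_)
      · rw [haeq]; exact hTfin α
      · intro W hW; exact hopen W hW.1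
    · rw [Set.eq_singleton_iff_unique_mem]
      constructor
      · refine ⟨⟨haeq ▸ hptS α, ?_⟩, ha⟩
        intro W hW; exact hW.2
      · rintro b ⟨⟨hbS, hbInter⟩, hbA⟩
        have hZbne : {U : 𝒰 | f U = b}.Nonempty := hbA
        set β := wf.min _ hZbne with hβ
        have hβZ : f β = b := wf.min_mem _ hZbne
        have hβmin : ∀ V, f V = f β → ¬ r V β := by
          intro V hV
          exact wf.not_lt_min _ (hV.trans hβZ)
        obtain ⟨hβpt, hβnoreuse⟩ := fresh β hβmin
        have hbeq : b = pt β := hβZ ▸ hβpt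
        have hbβ : b ∈ (β : Set X) := hbeq ▸ hSsub β (hptS β)
        have hbD : b ∈ D := hβZ ▸ (hmem β).2
        rcases trichotomous_of r β α with hr | he | hr
        · -- r β α : contradiction with no reuse at α
          exact absurd (hbInter (α : Set X) ⟨α.2, haα⟩)
            (hβZ ▸ hαnoreuse β hr)
        · rw [he] at hβZ; rw [← hβZ, hαZ]
        · -- r α β : contradiction with maximality at α
          have haβ : a ∉ (β : Set X) := hαZ ▸ hβnoreuse α hr
          exfalso
          refine hmax α b hbD hbS ?_
          rw [← haeq]
          constructor
          · intro W hW
            exact ⟨hW.1, hbInter W hW⟩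
          · intro hsub
            exact haβ (hsub ⟨β.2, hbβ⟩).2
  · intro U hU
    exact ⟨f ⟨U, hU⟩, ⟨⟨U, hU⟩, rfl⟩, (hmem ⟨U, hU⟩).1⟩
end

section
/- Every metrizable topological space is D-separable. -/
/-- `X` is D-separable: for every sequence of dense sets `D n` one can pick
discrete `F n ⊆ D n` whose union is dense. -/
def DSeparable (X : Type*) [TopologicalSpace X] : Prop :=
  ∀ D : ℕ → Set X, (∀ n, Dense (D n)) →
    ∃ F : ℕ → Set X, (∀ n, F n ⊆ D n) ∧ (∀ n, IsDiscreteSet (F n)) ∧ Dense (⋃ n, F n)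

/-- `P` is a π-base: a family of nonempty open sets such that every nonempty
open set contains a member. -/
def IsPiBase (X : Type*) [TopologicalSpace X] (B : Set (Set X)) : Prop :=
  (∀ P ∈ B, IsOpen P ∧ P.Nonempty) ∧
    ∀ U : Set X, IsOpen U → U.Nonempty → ∃ P ∈ B, P ⊆ U


/-- Every metrizable space is D-separable. -/
theorem dSeparable_of_metrizable (X : Type*) [TopologicalSpace X]
    [TopologicalSpace.MetrizableSpace X] : DSeparable X := by
  letI : MetricSpace X := TopologicalSpace.metrizableSpaceMetric X
  intro D hD
  have key : ∀ n : ℕ, ∃ F : Set X,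
      Maximal (fun S => S ⊆ D n ∧ S.Pairwise (fun x y => ((1:ℝ)/2)^n ≤ dist x y)) F := by
    intro n
    apply zorn_subset
    intro c hc hchain
    refine ⟨⋃₀ c, ⟨Set.sUnion_subset fun s hs => (hc hs).1, ?_⟩,
      fun s hs => Set.subset_sUnion_of_mem hs⟩
    intro x hx y hy hxy
    obtain ⟨s, hs, hxs⟩ := hx
    obtain ⟨t, ht, hyt⟩ := hy
    rcases hchain.total hs ht with h | h
    · exact (hc ht).2 (h hxs) hyt hxy
    · exact (hc hs).2 hxs (h hyt) hxy
  choose F hF using key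
  refine ⟨F, fun n => (hF n).1.1, ?_, ?_⟩
  · intro n a ha
    refine ⟨Metric.ball a (((1:ℝ)/2)^n), Metric.isOpen_ball, ?_⟩
    ext y
    simp only [Set.mem_inter_iff, Metric.mem_ball, Set.mem_singleton_iff]
    constructor
    · rintro ⟨hy, hyF⟩
      by_contra h
      have h2 : ((1:ℝ)/2)^n ≤ dist y a := (hF n).1.2 hyF ha h
      linarith
    · rintro rfl
      exact ⟨by rw [dist_self]; positivity, ha⟩
  · rw [Metric.dense_iff]
    intro x r hr
    obtain ⟨n, hn⟩ := exists_pow_lt_of_lt_one (show (0:ℝ) < r/2 by linarith)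
      (show (1:ℝ)/2 < 1 by norm_num)
    obtain ⟨d, hd, hdD⟩ := Metric.dense_iff.mp (hD n) x (r/2) (by linarith)
    have hdx : dist d x < r/2 := Metric.mem_ball.mp hd
    have : ∃ f ∈ F n, dist d f < ((1:ℝ)/2)^n := by
      by_cases hdF : d ∈ F n
      · exact ⟨d, hdF, by rw [dist_self]; positivity⟩
      · by_contra h
        push_neg at h
        have hins : insert d (F n) ⊆ F n := by
          apply (hF n).2 _ (Set.subset_insert _ _)
          refine ⟨Set.insert_subset hdD (hF n).1.1, ?_⟩
          haveI : Std.Symm (fun x y : X => ((1:ℝ)/2)^n ≤ dist x y) := ⟨fun a b hab => by rwa [dist_comm]⟩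
          rw [Set.pairwise_insert_of_symm]
          exact ⟨(hF n).1.2, fun f hf _ => h f hf⟩
        exact hdF (hins (Set.mem_insert _ _))
    obtain ⟨f, hfF, hdf⟩ := this
    refine ⟨f, Metric.mem_ball.mpr ?_, Set.mem_iUnion.mpr ⟨n, hfF⟩⟩
    calc dist f x ≤ dist f d + dist d x := dist_triangle _ _ _
      _ < ((1:ℝ)/2)^n + r/2 := by rw [dist_comm]; exact add_lt_add hdf hdx
      _ < r/2 + r/2 := by linarith
      _ = r := by ring
end

section
/- The union of two D-separable subspaces is D-separable: if X = A ∪ B where the subspaces A and B of X are D-separable, then X is D-separable. -/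
namespace DSepAux

variable {X : Type*} [TopologicalSpace X]

/-- An open set contained in the closure of `T` meets `T` if nonempty. -/
lemma open_meets {V T : Set X} (hV : IsOpen V) (hne : V.Nonempty) (h : V ⊆ closure T) :
    (V ∩ T).Nonempty := by
  obtain ⟨x, hx⟩ := hne
  exact mem_closure_iff.mp (h hx) V hV hx

/-- Density in a subspace, characterized by ambient open sets. -/
lemma dense_val_preimage_iff {S E : Set X} (hE : E ⊆ S) :
    Dense ((↑) ⁻¹' E : Set S) ↔
      ∀ V : Set X, IsOpen V → (V ∩ S).Nonempty → (V ∩ E).Nonempty := by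
  constructor
  · intro h V hV hne
    obtain ⟨x, hxV, hxS⟩ := hne
    have hx : (⟨x, hxS⟩ : S) ∈ closure ((↑) ⁻¹' E : Set S) := h _
    rw [closure_subtype] at hx
    have hx2 : x ∈ closure E := by
      refine closure_mono ?_ hx
      rintro y ⟨z, hz, rfl⟩; exact hz
    exact mem_closure_iff.mp hx2 V hV hxV
  · intro h x
    rw [closure_subtype, mem_closure_iff]
    intro o ho hxo
    rcases h o ho ⟨x, hxo, x.2⟩ with ⟨y, hyo, hyE⟩
    exact ⟨y, hyo, ⟨⟨y, hE hyE⟩, hyE, rfl⟩⟩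

/-- Discrete subsets of a subspace are discrete in the ambient space. -/
lemma isDiscrete_image {S : Set X} {F : Set S} (h : IsDiscreteSet F) :
    IsDiscreteSet ((↑) '' F : Set X) := by
  rintro a ⟨b, hbF, rfl⟩
  obtain ⟨U, hU, hUF⟩ := h b hbF
  obtain ⟨V, hV, rfl⟩ := isOpen_induced_iff.mp hU
  refine ⟨V, hV, ?_⟩
  ext y
  constructor
  · rintro ⟨hyV, c, hcF, rfl⟩
    have hc : c ∈ ((↑) ⁻¹' V : Set S) ∩ F := ⟨hyV, hcF⟩
    rw [hUF] at hc
    simp only [Set.mem_singleton_iff] at hc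
    rw [hc]; rfl
  · rintro rfl
    have hb : b ∈ ((↑) ⁻¹' V : Set S) ∩ F := by
      rw [hUF]; rfl
    exact ⟨hb.1, b, hbF, rfl⟩

/-- The canonical "feed": any set together with the part of `S` away from its closure is
dense in the subspace `S`. -/
lemma feed_dense {S G : Set X} (hG : G ⊆ S) :
    Dense ((↑) ⁻¹' (G ∪ (S \ closure G)) : Set S) := by
  rw [dense_val_preimage_iff (by rintro x (h | h); exacts [hG h, h.1])]
  intro V hV ⟨x, hxV, hxS⟩
  by_cases h : (V ∩ G).Nonempty
  · exact h.imp fun y hy => ⟨hy.1, Or.inl hy.2⟩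
  · rw [Set.not_nonempty_iff_eq_empty] at h
    refine ⟨x, hxV, Or.inr ⟨hxS, ?_⟩⟩
    intro hx
    rcases mem_closure_iff.mp hx V hV hxV with ⟨y, hy⟩
    exact absurd h (by rw [← Set.not_nonempty_iff_eq_empty]; exact fun h' => h' ⟨y, hy⟩)





/-- Condition for a labelled blob `(Y, n)` relative to region `R`, zones `U`,
and forbidden sets `pr`. -/
def Cond (R : Set X) (U : ℕ → Set X) (pr : ℕ → Set X) (p : Set X × ℕ) : Prop :=
  IsOpen p.1 ∧ p.1.Nonempty ∧ p.1 ⊆ R ∧ p.1 ⊆ U p.2 ∧ p.1 ∩ closure (pr p.2) = ∅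

/-- A valid family of labelled blobs: each satisfies `Cond` and distinct members
have disjoint blobs. -/
def Valid (R : Set X) (U : ℕ → Set X) (pr : ℕ → Set X) (F : Set (Set X × ℕ)) : Prop :=
  (∀ p ∈ F, Cond R U pr p) ∧ ∀ p ∈ F, ∀ q ∈ F, p ≠ q → p.1 ∩ q.1 = ∅

lemma exMax (R : Set X) (U : ℕ → Set X) (pr : ℕ → Set X) :
    ∃ F, Maximal (Valid R U pr) F := by
  apply zorn_subset
  intro c hc hchain
  refine ⟨⋃₀ c, ⟨?_, ?_⟩, fun s hs => Set.subset_sUnion_of_mem hs⟩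
  · rintro p ⟨F, hF, hpF⟩
    exact (hc hF).1 p hpF
  · rintro p ⟨F, hF, hpF⟩ q ⟨F', hF', hqF'⟩ hpq
    rcases hchain.total hF hF' with h | h
    · exact (hc hF').2 p (h hpF) q hqF' hpq
    · exact (hc hF).2 p hpF q (h hqF') hpq

/-- Prefix sequence of rows. `RowsW R U k` is defined for indices `< k`. -/
noncomputable def RowsW (R : Set X) (U : ℕ → Set X) : ℕ → ℕ → Set (Set X × ℕ) :=
  fun k => Nat.rec (motive := fun _ => ℕ → Set (Set X × ℕ)) (fun _ => ∅)
    (fun k Wk j => if j = k then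
        (exMax R U (fun n => ⋃₀ {Y : Set X | ∃ j', j' < k ∧ (Y, n) ∈ Wk j'})).choose
      else Wk j) k

/-- The rows. -/
noncomputable def Rows (R : Set X) (U : ℕ → Set X) : ℕ → Set (Set X × ℕ) :=
  fun k => RowsW R U (k + 1) k

/-- Union of the blobs with label `n` in rows before `k`. -/
def Bl (R : Set X) (U : ℕ → Set X) (k n : ℕ) : Set X :=
  ⋃₀ {Y : Set X | ∃ j', j' < k ∧ (Y, n) ∈ Rows R U j'}

lemma rowsW_succ (R : Set X) (U : ℕ → Set X) (k j : ℕ) :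
    RowsW R U (k + 1) j = if j = k then
        (exMax R U (fun n => ⋃₀ {Y : Set X | ∃ j', j' < k ∧ (Y, n) ∈ RowsW R U k j'})).choose
      else RowsW R U k j := rfl

lemma rowsW_coh (R : Set X) (U : ℕ → Set X) :
    ∀ k j, j < k → RowsW R U k j = Rows R U j := by
  intro k
  induction k with
  | zero => intro j hj; omega
  | succ k ih =>
    intro j hj
    rcases Nat.lt_succ_iff_lt_or_eq.mp hj with h | rfl
    · rw [rowsW_succ, if_neg (by omega), ih j h]
    · rfl

lemma rows_spec (R : Set X) (U : ℕ → Set X) (k : ℕ) :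
    Maximal (Valid R U (Bl R U k)) (Rows R U k) := by
  have h1 : Rows R U k =
      (exMax R U (fun n => ⋃₀ {Y : Set X | ∃ j', j' < k ∧ (Y, n) ∈ RowsW R U k j'})).choose := by
    show RowsW R U (k+1) k = _
    rw [rowsW_succ, if_pos rfl]
  have h2 : (fun n => ⋃₀ {Y : Set X | ∃ j', j' < k ∧ (Y, n) ∈ RowsW R U k j'}) = Bl R U k := by
    funext n
    have hsets : {Y : Set X | ∃ j', j' < k ∧ (Y, n) ∈ RowsW R U k j'} =
        {Y : Set X | ∃ j', j' < k ∧ (Y, n) ∈ Rows R U j'} := by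
      ext Y
      constructor
      · rintro ⟨j', hj', hm⟩; exact ⟨j', hj', by rwa [rowsW_coh R U k j' hj'] at hm⟩
      · rintro ⟨j', hj', hm⟩; exact ⟨j', hj', by rwa [rowsW_coh R U k j' hj']⟩
    rw [Bl, hsets]
  rw [h1]
  have h3 := (exMax R U
      (fun n => ⋃₀ {Y : Set X | ∃ j', j' < k ∧ (Y, n) ∈ RowsW R U k j'})).choose_spec
  have e : Valid R U (fun n => ⋃₀ {Y : Set X | ∃ j', j' < k ∧ (Y, n) ∈ RowsW R U k j'}) =
      Valid R U (Bl R U k) := by rw [h2]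
  exact e ▸ h3


lemma stage (S : Set X) (hS : DSeparable S) (D : ℕ → Set X) (hD : ∀ n, Dense (D n))
    (R : Set X) (hRo : IsOpen R)
    (hmenu : ∀ G : Set X, IsOpen G → G.Nonempty → G ⊆ R →
      {n : ℕ | (G ∩ interior (closure (D n ∩ S))).Nonempty}.Infinite) :
    ∃ Q : ℕ → Set X, (∀ n, Q n ⊆ D n ∩ R) ∧ (∀ n, IsDiscreteSet (Q n)) ∧
      (∀ G : Set X, IsOpen G → (G ∩ R).Nonempty → (G ∩ ⋃ n, Q n).Nonempty) := by
  classical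
  set U : ℕ → Set X := fun n => interior (closure (D n ∩ S)) with hU
  have hUo : ∀ n, IsOpen (U n) := fun n => isOpen_interior
  have hUsub : ∀ n, U n ⊆ closure (D n ∩ S) := fun n => interior_subset
  have hCond : ∀ k, ∀ p ∈ Rows R U k, Cond R U (Bl R U k) p :=
    fun k => (rows_spec R U k).1.1
  have hdisj : ∀ k, ∀ p ∈ Rows R U k, ∀ q ∈ Rows R U k, p ≠ q → p.1 ∩ q.1 = ∅ :=
    fun k => (rows_spec R U k).1.2
  -- each row's blob union is dense in R
  have rowDense : ∀ (k : ℕ) (N : Set X), IsOpen N → (N ∩ R).Nonempty →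
      ∃ p ∈ Rows R U k, (N ∩ p.1).Nonempty := by
    intro k N hNo hNR
    by_contra hcon
    push_neg at hcon
    set R' := N ∩ R with hR'def
    have hR'o : IsOpen R' := hNo.inter hRo
    have hR'R : R' ⊆ R := Set.inter_subset_right
    have hR'ne : R'.Nonempty := hNR
    have hR'row : ∀ p ∈ Rows R U k, R' ∩ p.1 = ∅ := by
      intro p hp
      have h0 := hcon p hp
      rw [← Set.not_nonempty_iff_eq_empty] at h0 ⊢
      rintro ⟨x, hx1, hx2⟩
      exact h0 ⟨x, hx1.1, hx2⟩
    have hempty : ∀ n, R' ∩ U n ∩ (closure (Bl R U k n))ᶜ = ∅ := by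
      intro n
      by_contra hne0
      rw [← ne_eq, ← Set.nonempty_iff_ne_empty] at hne0
      set Y₀ := R' ∩ U n ∩ (closure (Bl R U k n))ᶜ with hY₀def
      have hY₀o : IsOpen Y₀ := (hR'o.inter (hUo n)).inter isClosed_closure.isOpen_compl
      have hY₀cond : Cond R U (Bl R U k) (Y₀, n) := by
        refine ⟨hY₀o, hne0, fun x hx => hR'R hx.1.1, fun x hx => hx.1.2, ?_⟩
        rw [← Set.not_nonempty_iff_eq_empty]
        rintro ⟨x, hx1, hx2⟩
        exact hx1.2 hx2
      have hY₀disj : ∀ q ∈ Rows R U k, Y₀ ∩ q.1 = ∅ := by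
        intro q hq
        rw [← Set.not_nonempty_iff_eq_empty]
        rintro ⟨x, hx1, hx2⟩
        have h0 := hR'row q hq
        rw [← Set.not_nonempty_iff_eq_empty] at h0
        exact h0 ⟨x, hx1.1.1, hx2⟩
      have hnotmem : ((Y₀, n) : Set X × ℕ) ∉ Rows R U k := by
        intro hmem
        have h0 := hY₀disj _ hmem
        rw [Set.inter_self] at h0
        rw [h0] at hne0
        exact Set.not_nonempty_empty hne0
      have hvalid' : Valid R U (Bl R U k) (insert ((Y₀, n) : Set X × ℕ) (Rows R U k)) := by
        constructor
        · intro p hp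
          rcases Set.mem_insert_iff.mp hp with rfl | hp
          · exact hY₀cond
          · exact hCond k p hp
        · intro p hp q hq hpq
          rcases Set.mem_insert_iff.mp hp with rfl | hp
          · rcases Set.mem_insert_iff.mp hq with rfl | hq
            · exact absurd rfl hpq
            · exact hY₀disj q hq
          · rcases Set.mem_insert_iff.mp hq with rfl | hq
            · rw [Set.inter_comm]; exact hY₀disj p hp
            · exact hdisj k p hp q hq hpq
      have hsub := (rows_spec R U k).2 hvalid' (Set.subset_insert _ _)
      exact hnotmem (hsub (Set.mem_insert _ _))
    have descent : ∀ j : ℕ, j ≤ k + 1 → ∃ (G : Set X) (E : Finset (ℕ × ℕ)),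
        IsOpen G ∧ G.Nonempty ∧ G ⊆ R' ∧
        (E.image Prod.fst).card = j ∧ (E.image Prod.snd).card = j ∧
        (∀ p ∈ E, p.1 < k) ∧
        (∀ p ∈ E, ∃ Y : Set X, (Y, p.2) ∈ Rows R U p.1 ∧ G ⊆ Y) := by
      intro j
      induction j with
      | zero =>
        exact fun _ => ⟨R', ∅, hR'o, hR'ne, subset_rfl, by simp, by simp, by simp, by simp⟩
      | succ j ih =>
        intro hj
        obtain ⟨G, E, hGo, hGne, hGR', hcf, hcs, hrowlt, hwit⟩ := ih (by omega)
        have hGR : G ⊆ R := hGR'.trans hR'R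
        have hinf := hmenu G hGo hGne hGR
        obtain ⟨nn, hnnmem, hnnnew⟩ :
            ∃ n, (G ∩ U n).Nonempty ∧ n ∉ E.image Prod.snd := by
          obtain ⟨n, hn1, hn2⟩ := (hinf.diff (E.image Prod.snd).finite_toSet).nonempty
          exact ⟨n, hn1, by simpa using hn2⟩
        have hblock : G ∩ U nn ⊆ closure (Bl R U k nn) := by
          intro y hy
          by_contra hy'
          have hmem : y ∈ R' ∩ U nn ∩ (closure (Bl R U k nn))ᶜ := ⟨⟨hGR' hy.1, hy.2⟩, hy'⟩
          rw [hempty nn] at hmem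
          exact hmem
        have hGUo : IsOpen (G ∩ U nn) := hGo.inter (hUo nn)
        obtain ⟨y, hyGU, hyBl⟩ := open_meets hGUo hnnmem hblock
        obtain ⟨Ys, ⟨js, hjs, hjsmem⟩, hyYs⟩ := hyBl
        set G' := (G ∩ U nn) ∩ Ys with hG'def
        have hYso : IsOpen Ys := (hCond js _ hjsmem).1
        have hG'o : IsOpen G' := hGUo.inter hYso
        have hG'ne : G'.Nonempty := ⟨y, hyGU, hyYs⟩
        have hG'R' : G' ⊆ R' := fun x hx => hGR' hx.1.1
        have hG'G : G' ⊆ G := fun x hx => hx.1.1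
        have hfresh : js ∉ E.image Prod.fst := by
          intro hmem
          rw [Finset.mem_image] at hmem
          obtain ⟨p, hpE, hfst⟩ := hmem
          obtain ⟨Y', hY'mem, hGY'⟩ := hwit p hpE
          rw [hfst] at hY'mem
          have hnefst : ((Ys, nn) : Set X × ℕ) ≠ (Y', p.2) := by
            intro he
            apply hnnnew
            rw [Finset.mem_image]
            exact ⟨p, hpE, ((Prod.ext_iff.mp he).2).symm⟩
          have hd := hdisj js _ hjsmem _ hY'mem hnefst
          obtain ⟨x, hx⟩ := hG'ne
          have hxx : x ∈ Ys ∩ Y' := ⟨hx.2, hGY' (hG'G hx)⟩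
          rw [hd] at hxx
          exact hxx
        refine ⟨G', insert (js, nn) E, hG'o, hG'ne, hG'R', ?_, ?_, ?_, ?_⟩
        · rw [Finset.image_insert, Finset.card_insert_of_notMem hfresh, hcf]
        · rw [Finset.image_insert, Finset.card_insert_of_notMem hnnnew, hcs]
        · intro p hp
          rcases Finset.mem_insert.mp hp with rfl | hp
          · exact hjs
          · exact hrowlt p hp
        · intro p hp
          rcases Finset.mem_insert.mp hp with rfl | hp
          · exact ⟨Ys, hjsmem, fun x hx => hx.2⟩
          · obtain ⟨Y', h1, h2⟩ := hwit p hp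
            exact ⟨Y', h1, hG'G.trans h2⟩
    obtain ⟨G, E, _, _, _, hcf, _, hrowlt, _⟩ := descent (k + 1) le_rfl
    have hsubr : E.image Prod.fst ⊆ Finset.range k := by
      intro r hr
      rw [Finset.mem_image] at hr
      obtain ⟨p, hp, rfl⟩ := hr
      exact Finset.mem_range.mpr (hrowlt p hp)
    have hcard := Finset.card_le_card hsubr
    rw [hcf, Finset.card_range] at hcard
    omega
  -- the good material of each row
  set Goods : ℕ → Set X := fun k => ⋃ p ∈ Rows R U k, (D p.2 ∩ S ∩ p.1) with hGoodsdef
  have hGoodsS : ∀ k, Goods k ⊆ S := by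
    intro k x hx
    rw [hGoodsdef] at hx
    simp only [Set.mem_iUnion] at hx
    obtain ⟨p, hp, hx⟩ := hx
    exact hx.1.2
  have hK1 : ∀ k, R ⊆ closure (Goods k) := by
    intro k x hx
    rw [mem_closure_iff]
    intro N hNo hxN
    obtain ⟨p, hp, hne⟩ := rowDense k N hNo ⟨x, hxN, hx⟩
    have hNp : IsOpen (N ∩ p.1) := hNo.inter (hCond k p hp).1
    have hsubcl : N ∩ p.1 ⊆ closure (D p.2 ∩ S) :=
      fun z hz => hUsub p.2 ((hCond k p hp).2.2.2.1 hz.2)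
    obtain ⟨z, hz1, hz2⟩ := open_meets hNp hne hsubcl
    refine ⟨z, hz1.1, ?_⟩
    rw [hGoodsdef]
    simp only [Set.mem_iUnion]
    exact ⟨p, hp, ⟨hz2, hz1.2⟩⟩
  obtain ⟨F', hF'sub, hF'disc, hF'dense⟩ :=
    hS (fun k => (↑) ⁻¹' (Goods k ∪ (S \ closure (Goods k))))
      (fun k => feed_dense (hGoodsS k))
  set Fimg : ℕ → Set X := fun k => (↑) '' (F' k) with hFimgdef
  have hFimgE : ∀ k, Fimg k ⊆ Goods k ∪ (S \ closure (Goods k)) := by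
    intro k
    rw [hFimgdef]
    calc (↑) '' (F' k)
        ⊆ (↑) '' ((↑) ⁻¹' (Goods k ∪ (S \ closure (Goods k))) : Set S) :=
          Set.image_mono (hF'sub k)
      _ ⊆ Goods k ∪ (S \ closure (Goods k)) := Set.image_preimage_subset _ _
  have hFimgDisc : ∀ k, IsDiscreteSet (Fimg k) := fun k => isDiscrete_image (hF'disc k)
  have hK2 : ∀ k, Fimg k ∩ R ⊆ Goods k := by
    intro k y hy
    rcases hFimgE k hy.1 with h | h
    · exact h
    · exact absurd (hK1 k hy.2) h.2
  have hK3 : ∀ k, ∀ p ∈ Rows R U k, Fimg k ∩ p.1 ⊆ D p.2 ∩ S ∩ p.1 := by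
    intro k p hp y hy
    have hyR : y ∈ R := (hCond k p hp).2.2.1 hy.2
    have hyG := hK2 k ⟨hy.1, hyR⟩
    rw [hGoodsdef] at hyG
    simp only [Set.mem_iUnion] at hyG
    obtain ⟨q, hq, hyq⟩ := hyG
    by_cases hpq : p = q
    · subst hpq; exact hyq
    · have hd := hdisj k p hp q hq hpq
      have hyy : y ∈ p.1 ∩ q.1 := ⟨hy.2, hyq.2⟩
      rw [hd] at hyy
      exact hyy.elim
  refine ⟨fun n => ⋃ k, ⋃ Y, ⋃ (_ : ((Y, n) : Set X × ℕ) ∈ Rows R U k), (Fimg k ∩ Y),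
    ?_, ?_, ?_⟩
  · intro n y hy
    simp only [Set.mem_iUnion] at hy
    obtain ⟨k, Y, hmem, hy⟩ := hy
    have h3 := hK3 k (Y, n) hmem hy
    exact ⟨h3.1.1, (hCond k (Y, n) hmem).2.2.1 hy.2⟩
  · intro n a ha
    simp only [Set.mem_iUnion] at ha
    obtain ⟨k, Y, hmem, haF, haY⟩ := ha
    obtain ⟨V, hVo, hVF⟩ := hFimgDisc k a haF
    have haV : a ∈ V := by
      have h0 : a ∈ V ∩ Fimg k := by rw [hVF]; rfl
      exact h0.1
    refine ⟨V ∩ Y, hVo.inter (hCond k (Y, n) hmem).1, ?_⟩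
    apply Set.eq_singleton_iff_unique_mem.mpr
    constructor
    · refine ⟨⟨haV, haY⟩, ?_⟩
      simp only [Set.mem_iUnion]
      exact ⟨k, Y, hmem, haF, haY⟩
    · rintro y ⟨⟨hyV, hyY⟩, hyQ⟩
      simp only [Set.mem_iUnion] at hyQ
      obtain ⟨k', Y', hmem', hyF', hyY'⟩ := hyQ
      rcases lt_trichotomy k' k with h | h | h
      · have hyBl : y ∈ Bl R U k n := ⟨Y', ⟨k', h, hmem'⟩, hyY'⟩
        have hyy : y ∈ Y ∩ closure (Bl R U k n) := ⟨hyY, subset_closure hyBl⟩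
        rw [(hCond k (Y, n) hmem).2.2.2.2] at hyy
        exact hyy.elim
      · subst h
        by_cases hYY : Y' = Y
        · subst hYY
          have h0 : y ∈ V ∩ Fimg k' := ⟨hyV, hyF'⟩
          rw [hVF] at h0
          exact h0
        · have hne : ((Y, n) : Set X × ℕ) ≠ (Y', n) :=
            fun he => hYY ((Prod.ext_iff.mp he).1).symm
          have hd := hdisj k' (Y, n) hmem (Y', n) hmem' hne
          have hyy : y ∈ Y ∩ Y' := ⟨hyY, hyY'⟩
          rw [hd] at hyy
          exact hyy.elim
      · have hyBl : y ∈ Bl R U k' n := ⟨Y, ⟨k, h, hmem⟩, hyY⟩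
        have hyy : y ∈ Y' ∩ closure (Bl R U k' n) := ⟨hyY', subset_closure hyBl⟩
        rw [(hCond k' (Y', n) hmem').2.2.2.2] at hyy
        exact hyy.elim
  · intro G hGo hGR
    set G1 := G ∩ R with hG1def
    have hG1o : IsOpen G1 := hGo.inter hRo
    have hG1ne : G1.Nonempty := hGR
    have hG1R : G1 ⊆ R := Set.inter_subset_right
    obtain ⟨n₀, hn₀⟩ := (hmenu G1 hG1o hG1ne hG1R).nonempty
    have hn₀' : (G1 ∩ U n₀).Nonempty := hn₀
    have hsubS : G1 ∩ U n₀ ⊆ closure S := fun z hz =>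
      closure_mono (fun w hw => hw.2) (hUsub n₀ hz.2)
    obtain ⟨x, hx1, hxS⟩ := open_meets (hG1o.inter (hUo n₀)) hn₀' hsubS
    have hxcl : (⟨x, hxS⟩ : S) ∈ closure (⋃ k, F' k) := hF'dense _
    rw [closure_subtype] at hxcl
    obtain ⟨y, hyG1, hyim⟩ := mem_closure_iff.mp hxcl G1 hG1o hx1.1
    rw [Set.image_iUnion] at hyim
    simp only [Set.mem_iUnion] at hyim
    obtain ⟨k, hyk⟩ := hyim
    have hyF : y ∈ Fimg k := by rw [hFimgdef]; exact hyk
    have hyGoods := hK2 k ⟨hyF, hG1R hyG1⟩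
    rw [hGoodsdef] at hyGoods
    simp only [Set.mem_iUnion] at hyGoods
    obtain ⟨p, hp, hyp⟩ := hyGoods
    refine ⟨y, hyG1.1, ?_⟩
    simp only [Set.mem_iUnion]
    refine ⟨p.2, k, p.1, ?_, hyF, hyp.2⟩
    rw [Prod.mk.eta]
    exact hp


lemma fact0 (A B : Set X) (hAB : A ∪ B = Set.univ) {Dn : Set X} (hDn : Dense Dn)
    {G : Set X} (hG : IsOpen G) (hne : G.Nonempty) :
    (G ∩ interior (closure (Dn ∩ A))).Nonempty ∨
    (G ∩ interior (closure (Dn ∩ B))).Nonempty := by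
  by_cases hT : (G \ closure (Dn ∩ A)).Nonempty
  · right
    set T := G \ closure (Dn ∩ A) with hTdef
    have hTo : IsOpen T := hG.sdiff isClosed_closure
    have hTsub : T ⊆ closure (Dn ∩ B) := by
      intro x hx
      rw [mem_closure_iff]
      intro V hV hxV
      have hVT : IsOpen (V ∩ T) := hV.inter hTo
      obtain ⟨d, hd1, hd2⟩ := hDn.inter_open_nonempty _ hVT ⟨x, hxV, hx⟩
      have hdB : d ∈ B := by
        have hdu : d ∈ A ∪ B := by rw [hAB]; trivial
        rcases hdu with h | h
        · exact absurd (subset_closure (Set.mem_inter hd2 h)) hd1.2.2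
        · exact h
      exact ⟨d, hd1.1, hd2, hdB⟩
    obtain ⟨x, hx⟩ := hT
    exact ⟨x, hx.1, (hTo.subset_interior_iff.mpr hTsub) hx⟩
  · left
    rw [Set.not_nonempty_iff_eq_empty, Set.diff_eq_empty] at hT
    obtain ⟨x, hx⟩ := hne
    exact ⟨x, hx, (hG.subset_interior_iff.mpr hT) hx⟩

lemma dichotomy (A B : Set X) (hAB : A ∪ B = Set.univ) (D : ℕ → Set X)
    (hD : ∀ n, Dense (D n)) (O : Set X) (hO : IsOpen O) (hOne : O.Nonempty) :
    ∃ R : Set X, IsOpen R ∧ R.Nonempty ∧ R ⊆ O ∧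
      ((∀ G : Set X, IsOpen G → G.Nonempty → G ⊆ R →
          {n : ℕ | (G ∩ interior (closure (D n ∩ A))).Nonempty}.Infinite) ∨
       (∀ G : Set X, IsOpen G → G.Nonempty → G ⊆ R →
          {n : ℕ | (G ∩ interior (closure (D n ∩ B))).Nonempty}.Infinite)) := by
  by_cases h : ∀ G : Set X, IsOpen G → G.Nonempty → G ⊆ O →
      {n : ℕ | (G ∩ interior (closure (D n ∩ A))).Nonempty}.Infinite
  · exact ⟨O, hO, hOne, subset_rfl, Or.inl h⟩
  · push_neg at h
    obtain ⟨R, hRo, hRne, hRO, hRfin⟩ := h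
    refine ⟨R, hRo, hRne, hRO, Or.inr ?_⟩
    intro G hGo hGne hGR
    have hsup : {n : ℕ | (R ∩ interior (closure (D n ∩ A))).Nonempty}ᶜ ⊆
        {n : ℕ | (G ∩ interior (closure (D n ∩ B))).Nonempty} := by
      intro n hn
      rcases fact0 A B hAB (hD n) hGo hGne with hcase | hcase
      · exfalso
        apply hn
        exact hcase.mono (Set.inter_subset_inter_left _ hGR)
      · exact hcase
    exact (hRfin.infinite_compl).mono hsup

end DSepAux

/-- The union of two D-separable subspaces is D-separable. -/
theorem dSeparable_union {X : Type*} [TopologicalSpace X] (A B : Set X)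
    (hAB : A ∪ B = Set.univ) (hA : DSeparable ↥A) (hB : DSeparable ↥B) :
    DSeparable X := by
  intro D hD
  classical
  -- "Good" open sets: those carrying a full system of selections
  let Good : Set X → Prop := fun V => IsOpen V ∧ ∃ Q : ℕ → Set X,
      (∀ n, Q n ⊆ D n ∩ V) ∧ (∀ n, IsDiscreteSet (Q n)) ∧
      (∀ G : Set X, IsOpen G → (G ∩ V).Nonempty → (G ∩ ⋃ n, Q n).Nonempty)
  have stageAll : ∀ O : Set X, IsOpen O → O.Nonempty →
      ∃ R : Set X, Good R ∧ R ⊆ O ∧ R.Nonempty := by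
    intro O hO hOne
    obtain ⟨R, hRo, hRne, hRO, hside⟩ := DSepAux.dichotomy A B hAB D hD O hO hOne
    rcases hside with hmenu | hmenu
    · obtain ⟨Q, h1, h2, h3⟩ := DSepAux.stage A hA D hD R hRo hmenu
      exact ⟨R, ⟨hRo, Q, h1, h2, h3⟩, hRO, hRne⟩
    · obtain ⟨Q, h1, h2, h3⟩ := DSepAux.stage B hB D hD R hRo hmenu
      exact ⟨R, ⟨hRo, Q, h1, h2, h3⟩, hRO, hRne⟩
  -- Zorn: a maximal pairwise disjoint family of Good open sets
  obtain ⟨C, hCmax⟩ : ∃ C, Maximal (· ∈ {C : Set (Set X) |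
      (∀ V ∈ C, Good V) ∧ ∀ V ∈ C, ∀ W ∈ C, V ≠ W → V ∩ W = ∅}) C := by
    apply zorn_subset
    intro c hc hchain
    refine ⟨⋃₀ c, ⟨?_, ?_⟩, fun s hs => Set.subset_sUnion_of_mem hs⟩
    · rintro V ⟨F, hF, hVF⟩
      exact (hc hF).1 V hVF
    · rintro V ⟨F, hF, hVF⟩ W ⟨F', hF', hWF'⟩ hVW
      rcases hchain.total hF hF' with h | h
      · exact (hc hF').2 V (h hVF) W hWF' hVW
      · exact (hc hF).2 V hVF W (h hWF') hVW
  have hCgood : ∀ V ∈ C, Good V := hCmax.1.1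
  have hCdisj : ∀ V ∈ C, ∀ W ∈ C, V ≠ W → V ∩ W = ∅ := hCmax.1.2
  -- the union of the family is dense
  have hCdense : Dense (⋃₀ C) := by
    rw [dense_iff_inter_open]
    intro O hO hOne
    by_contra hcon
    rw [Set.not_nonempty_iff_eq_empty] at hcon
    obtain ⟨R, hRgood, hRO, hRne⟩ := stageAll O hO hOne
    have hRdisj : ∀ V ∈ C, R ∩ V = ∅ := by
      intro V hV
      rw [← Set.not_nonempty_iff_eq_empty]
      rintro ⟨x, hx1, hx2⟩
      have : x ∈ O ∩ ⋃₀ C := ⟨hRO hx1, V, hV, hx2⟩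
      rw [hcon] at this
      exact this
    have hRnotmem : R ∉ C := by
      intro hmem
      have h0 := hRdisj R hmem
      rw [Set.inter_self] at h0
      rw [h0] at hRne
      exact Set.not_nonempty_empty hRne
    have hins : insert R C ∈ {C : Set (Set X) |
        (∀ V ∈ C, Good V) ∧ ∀ V ∈ C, ∀ W ∈ C, V ≠ W → V ∩ W = ∅} := by
      constructor
      · intro V hV
        rcases Set.mem_insert_iff.mp hV with rfl | hV
        · exact hRgood
        · exact hCgood V hV
      · intro V hV W hW hVW
        rcases Set.mem_insert_iff.mp hV with hV' | hV'
        · rcases Set.mem_insert_iff.mp hW with hW' | hW'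
          · exact absurd (hV'.trans hW'.symm) hVW
          · rw [hV']; exact hRdisj W hW'
        · rcases Set.mem_insert_iff.mp hW with hW' | hW'
          · rw [hW', Set.inter_comm]; exact hRdisj V hV'
          · exact hCdisj V hV' W hW' hVW
    have hsub := hCmax.2 hins (Set.subset_insert _ _)
    exact hRnotmem (hsub (Set.mem_insert _ _))
  -- choose the selections on each member
  have hchoice : ∀ V ∈ C, ∃ Q : ℕ → Set X,
      (∀ n, Q n ⊆ D n ∩ V) ∧ (∀ n, IsDiscreteSet (Q n)) ∧
      (∀ G : Set X, IsOpen G → (G ∩ V).Nonempty → (G ∩ ⋃ n, Q n).Nonempty) :=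
    fun V hV => (hCgood V hV).2
  choose! Qf hQ1 hQ2 hQ3 using hchoice
  refine ⟨fun n => ⋃ V ∈ C, Qf V n, ?_, ?_, ?_⟩
  · intro n y hy
    simp only [Set.mem_iUnion] at hy
    obtain ⟨V, hV, hy⟩ := hy
    exact (hQ1 V hV n hy).1
  · intro n a ha
    simp only [Set.mem_iUnion] at ha
    obtain ⟨V, hV, ha⟩ := ha
    obtain ⟨W, hWo, hWQ⟩ := hQ2 V hV n a ha
    have haV : a ∈ V := (hQ1 V hV n ha).2
    have haW : a ∈ W := by
      have h0 : a ∈ W ∩ Qf V n := by rw [hWQ]; rfl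
      exact h0.1
    obtain ⟨Vo, hVoo, hVone, hVosub⟩ : ∃ Vo : Set X, IsOpen Vo ∧ a ∈ Vo ∧ Vo ⊆ V :=
      ⟨V, (hCgood V hV).1, haV, subset_rfl⟩
    refine ⟨W ∩ Vo, hWo.inter hVoo, ?_⟩
    apply Set.eq_singleton_iff_unique_mem.mpr
    refine ⟨⟨⟨haW, hVone⟩, Set.mem_iUnion.mpr ⟨V, Set.mem_iUnion.mpr ⟨hV, ha⟩⟩⟩, ?_⟩
    rintro y ⟨⟨hyW, hyVo⟩, hyQ⟩
    simp only [Set.mem_iUnion] at hyQ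
    obtain ⟨V', hV', hy'⟩ := hyQ
    by_cases hVV : V' = V
    · subst hVV
      have h0 : y ∈ W ∩ Qf V' n := ⟨hyW, hy'⟩
      rw [hWQ] at h0
      exact h0
    · exfalso
      have hyV' : y ∈ V' := (hQ1 V' hV' n hy').2
      have h0 := hCdisj V' hV' V hV hVV
      have : y ∈ V' ∩ V := ⟨hyV', hVosub hyVo⟩
      rw [h0] at this
      exact this
  · -- density
    have hsub : ⋃₀ C ⊆ closure (⋃ n, ⋃ V ∈ C, Qf V n) := by
      rintro x ⟨V, hV, hxV⟩
      rw [mem_closure_iff]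
      intro N hNo hxN
      obtain ⟨y, hy1, hy2⟩ := hQ3 V hV N hNo ⟨x, hxN, hxV⟩
      refine ⟨y, hy1, ?_⟩
      simp only [Set.mem_iUnion] at hy2 ⊢
      obtain ⟨n, hn⟩ := hy2
      exact ⟨n, V, hV, hn⟩
    intro x
    have hx : x ∈ closure (⋃₀ C) := hCdense x
    exact closure_minimal hsub isClosed_closure hx
end

section
/- Every open subspace of a D-separable space is D-separable, and every dense subspace of a D-separable space is D-separable. -/
/-- Discreteness passes to preimages in a subspace. -/
lemma isDiscreteSet_preimage {X : Type*} [TopologicalSpace X] {S : Set X} (F : Set X)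
    (hF : IsDiscreteSet F) : IsDiscreteSet ((Subtype.val ⁻¹' F : Set ↥S)) := by
  intro a ha
  obtain ⟨V, hVopen, hVF⟩ := hF a.val ha
  refine ⟨Subtype.val ⁻¹' V, hVopen.preimage continuous_subtype_val, ?_⟩
  ext b
  constructor
  · rintro ⟨hbV, hbF⟩
    have : (b : X) ∈ V ∩ F := ⟨hbV, hbF⟩
    rw [hVF] at this
    exact Subtype.ext this
  · intro hb
    have hb' : b = a := hb
    subst hb'
    have : (b : X) ∈ V ∩ F := by rw [hVF]; rfl
    exact ⟨this.1, this.2⟩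

/-- Open subspaces and dense subspaces of a D-separable space are D-separable. -/
theorem dSeparable_open_and_dense_subspace {X : Type*} [TopologicalSpace X]
    (hX : DSeparable X) :
    (∀ U : Set X, IsOpen U → DSeparable ↥U) ∧
      (∀ D : Set X, Dense D → DSeparable ↥D) := by
  constructor
  · -- open subspaces
    intro U hU D hD
    set E : ℕ → Set X := fun n => (Subtype.val '' D n) ∪ Uᶜ with hE
    have hEdense : ∀ n, Dense (E n) := by
      intro n x
      by_cases hx : x ∈ U
      · have := (closure_subtype).mp (hD n ⟨x, hx⟩)
        exact closure_mono Set.subset_union_left this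
      · exact subset_closure (Or.inr hx)
    obtain ⟨F, hFE, hFdisc, hFdense⟩ := hX E hEdense
    refine ⟨fun n => Subtype.val ⁻¹' F n, ?_, fun n => isDiscreteSet_preimage _ (hFdisc n), ?_⟩
    · intro n a ha
      rcases hFE n ha with h | h
      · obtain ⟨b, hb, heq⟩ := h
        rwa [Subtype.val_injective heq] at hb
      · exact absurd a.2 h
    · intro x
      rw [closure_subtype]
      have himg : Subtype.val '' (⋃ n, (Subtype.val ⁻¹' F n : Set ↥U)) = (⋃ n, F n) ∩ U := by
        rw [Set.image_iUnion]
        simp [Set.image_preimage_eq_inter_range, Subtype.range_val, Set.iUnion_inter]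
      rw [himg]
      rw [mem_closure_iff]
      intro O hO hxO
      have h1 : IsOpen (O ∩ U) := hO.inter hU
      have h2 : x.val ∈ O ∩ U := ⟨hxO, x.2⟩
      obtain ⟨y, hy1, hy2⟩ := hFdense.inter_open_nonempty (O ∩ U) h1 ⟨_, h2⟩
      exact ⟨y, hy1.1, hy2, hy1.2⟩
  · -- dense subspaces
    intro Y hY D hD
    set E : ℕ → Set X := fun n => (Subtype.val '' D n) with hE
    have hYsub : ∀ n, Y ⊆ closure (E n) := by
      intro n y hy
      exact (closure_subtype).mp (hD n ⟨y, hy⟩)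
    have hEdense : ∀ n, Dense (E n) := by
      intro n x
      have : closure Y ⊆ closure (E n) := by
        rw [← closure_closure (s := E n)]
        exact closure_mono (hYsub n)
      exact this (hY x)
    obtain ⟨F, hFE, hFdisc, hFdense⟩ := hX E hEdense
    refine ⟨fun n => Subtype.val ⁻¹' F n, ?_, fun n => isDiscreteSet_preimage _ (hFdisc n), ?_⟩
    · intro n a ha
      obtain ⟨b, hb, heq⟩ := hFE n ha
      rwa [Subtype.val_injective heq] at hb
    · intro x
      rw [closure_subtype]
      have hFY : (⋃ n, F n) ⊆ Y := by
        intro z hz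
        obtain ⟨n, hn⟩ := Set.mem_iUnion.mp hz
        obtain ⟨b, _, heq⟩ := hFE n hn
        exact heq ▸ b.2
      have himg : Subtype.val '' (⋃ n, (Subtype.val ⁻¹' F n : Set ↥Y)) = ⋃ n, F n := by
        rw [Set.image_iUnion]
        simp only [Set.image_preimage_eq_inter_range, Subtype.range_val]
        rw [← Set.iUnion_inter, Set.inter_eq_left.mpr hFY]
      rw [himg]
      exact hFdense x.val
end

section
/- If a topological space X has an open dense subspace U such that U (with the subspace topology) is D-separable, then X is D-separable. -/
/-- If `X` has an open dense D-separable subspace, then `X` is D-separable. -/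
theorem dSeparable_of_open_dense_subspace {X : Type*} [TopologicalSpace X]
    (U : Set X) (hopen : IsOpen U) (hdense : Dense U) (hU : DSeparable ↥U) :
    DSeparable X := by
  intro D hD
  have hval : IsOpenMap ((↑) : U → X) := hopen.isOpenMap_subtype_val
  obtain ⟨F, hFsub, hFdisc, hFdense⟩ :=
    hU (fun n => (↑) ⁻¹' (D n)) (fun n => (hD n).preimage hval)
  refine ⟨fun n => (↑) '' (F n), ?_, ?_, ?_⟩
  · intro n x hx
    obtain ⟨u, hu, rfl⟩ := hx
    exact hFsub n hu
  · intro n x hx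
    obtain ⟨u, hu, rfl⟩ := hx
    obtain ⟨V, hVopen, hV⟩ := hFdisc n u hu
    obtain ⟨W, hWopen, rfl⟩ := isOpen_induced_iff.mp hVopen
    refine ⟨W ∩ U, hWopen.inter hopen, ?_⟩
    ext y
    constructor
    · rintro ⟨⟨hyW, hyU⟩, v, hv, rfl⟩
      have : (⟨(v : X), hyU⟩ : U) ∈ ((↑) ⁻¹' W) ∩ F n := by
        refine ⟨hyW, ?_⟩
        have : (⟨(v : X), hyU⟩ : U) = v := Subtype.ext rfl
        rw [this]; exact hv
      rw [hV] at this
      simp only [Set.mem_singleton_iff] at this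
      have := congrArg Subtype.val this
      simpa using this
    · rintro rfl
      have hu' : u ∈ ((↑) ⁻¹' W) ∩ F n := by rw [hV]; rfl
      exact ⟨⟨hu'.1, u.2⟩, u, hu'.2, rfl⟩
  · have h1 : U ⊆ closure (⋃ n, ((↑) : U → X) '' (F n)) := by
      intro x hx
      have : (⟨x, hx⟩ : U) ∈ closure (⋃ n, F n) := hFdense _
      have := image_closure_subset_closure_image (f := ((↑) : U → X))
        continuous_subtype_val ⟨⟨x, hx⟩, this, rfl⟩
      rw [Set.image_iUnion] at this
      exact this
    intro x
    have := closure_mono h1 (hdense x)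
    rwa [closure_closure] at this
end

section
/- Let X be a topological space and x ∈ X such that X has countable tightness at x and x has a neighborhood base of cardinality strictly less than the dominating number 𝔡. Then X has countable fan tightness at x: whenever (A_n : n ∈ ℕ) are subsets of X with x in the closure of each A_n, there exist finite sets F_n ⊆ A_n with x in the closure of ⋃_n F_n. -/
universe u

open Cardinal Filter

/-- The dominating number 𝔡: the least cardinality of a family of functions
`ℕ → ℕ` such that every function is eventually dominated by a member. -/
noncomputable def dominatingNumber : Cardinal :=
  sInf { c : Cardinal | ∃ F : Set (ℕ → ℕ), #F = c ∧
    ∀ g : ℕ → ℕ, ∃ f ∈ F, ∀ᶠ n in atTop, g n ≤ f n }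

/-- Countable tightness at `x` together with character less than 𝔡 implies
countable fan tightness at `x`. -/
theorem countable_fanTightness_of_character_lt_d
    {X : Type u} [TopologicalSpace X] (x : X)
    (ht : ∀ A : Set X, x ∈ closure A → ∃ B ⊆ A, B.Countable ∧ x ∈ closure B)
    (B : Set (Set X)) (hBnhds : ∀ U ∈ B, U ∈ nhds x)
    (hBbase : ∀ V ∈ nhds x, ∃ U ∈ B, U ⊆ V)
    (hcard : #B < Cardinal.lift.{u} dominatingNumber)
    (A : ℕ → Set X) (hA : ∀ n, x ∈ closure (A n)) :
    ∃ F : ℕ → Set X, (∀ n, F n ⊆ A n) ∧ (∀ n, (F n).Finite) ∧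
      x ∈ closure (⋃ n, F n) := by
  classical
  choose Bn hBnA hBnc hxBn using fun n => ht (A n) (hA n)
  have hBnne : ∀ n, (Bn n).Nonempty := by
    intro n
    rcases Set.eq_empty_or_nonempty (Bn n) with h | h
    · exfalso; have hx := hxBn n; rw [h, closure_empty] at hx; exact hx
    · exact h
  choose a ha using fun n => (hBnc n).exists_eq_range (hBnne n)
  -- for each U in B and n, there is k with a n k ∈ U
  have hex : ∀ (U : B) (n : ℕ), ∃ k, a n k ∈ (U : Set X) := by
    intro U n
    have hx : x ∈ closure (Set.range (a n)) := by rw [← ha n]; exact hxBn n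
    rcases mem_closure_iff_nhds.1 hx U (hBnhds U U.2) with ⟨y, hyU, hy⟩
    rcases hy with ⟨k, rfl⟩
    exact ⟨k, hyU⟩
  set f : B → ℕ → ℕ := fun U n => Nat.find (hex U n) with hf
  set Fam : Set (ℕ → ℕ) := Set.range f with hFam
  have hFamcard : #Fam < dominatingNumber := by
    have h1 : Cardinal.lift.{u} #Fam ≤ Cardinal.lift.{0} #B := Cardinal.mk_range_le_lift
    rw [Cardinal.lift_id'] at h1
    have := lt_of_le_of_lt h1 hcard
    exact (Cardinal.lift_lt.{0,u}).1 this
  -- Fam is not dominating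
  have hnotdom : ¬ (∀ g : ℕ → ℕ, ∃ h ∈ Fam, ∀ᶠ n in atTop, g n ≤ h n) := by
    intro h
    have : dominatingNumber ≤ #Fam := csInf_le' ⟨Fam, rfl, h⟩
    exact absurd hFamcard (not_lt.2 this)
  push_neg at hnotdom
  obtain ⟨g, hg⟩ := hnotdom
  refine ⟨fun n => (a n) '' (Set.Iic (g n)), ?_, ?_, ?_⟩
  · intro n
    intro y hy
    rcases hy with ⟨k, _, rfl⟩
    exact hBnA n (by rw [ha n]; exact Set.mem_range_self k)
  · intro n
    exact (Set.finite_Iic (g n)).image _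
  · rw [mem_closure_iff_nhds]
    intro V hV
    rcases hBbase V hV with ⟨U, hUB, hUV⟩
    have hfreq := hg (f ⟨U, hUB⟩) (Set.mem_range_self _)
    obtain ⟨n, hn⟩ := hfreq.exists
    refine ⟨a n (f ⟨U, hUB⟩ n), hUV (Nat.find_spec (hex ⟨U, hUB⟩ n)), ?_⟩
    exact Set.mem_iUnion.2 ⟨n, ⟨f ⟨U, hUB⟩ n, le_of_lt hn, rfl⟩⟩
end

section
/- Let X be a crowded (dense-in-itself) submaximal topological space. If X is d-separable (has a dense subset that is a countable union of discrete subsets), then X is a countable union of closed discrete subsets. -/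
/-- A crowded submaximal d-separable space is a countable union of closed
discrete subsets. -/
theorem sigma_closed_discrete_of_crowded_submaximal_dSeparable
    {X : Type*} [TopologicalSpace X]
    (hcrowded : ∀ x : X, ¬ IsOpen ({x} : Set X))
    (hsub : ∀ D : Set X, Dense D → IsOpen D)
    (H : ℕ → Set X) (hHdisc : ∀ n, IsDiscreteSet (H n)) (hHdense : Dense (⋃ n, H n)) :
    ∃ G : ℕ → Set X, (∀ n, IsClosed (G n)) ∧ (∀ n, IsDiscreteSet (G n)) ∧
      (⋃ n, G n) = Set.univ := by
  classical
  -- In a crowded submaximal space, every discrete set is closed.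
  have hclosed : ∀ A : Set X, IsDiscreteSet A → IsClosed A := by
    intro A hA
    have hdense : Dense (Aᶜ) := by
      rw [dense_iff_inter_open]
      intro U hU hUne
      by_contra h
      push_neg at h
      have hUA : U ⊆ A := by
        intro x hx
        by_contra hxA
        exact Set.eq_empty_iff_forall_notMem.mp h x ⟨hx, hxA⟩
      obtain ⟨a, ha⟩ := hUne
      obtain ⟨V, hV, hVA⟩ := hA a (hUA ha)
      have hsingle : U ∩ V = {a} := by
        apply Set.Subset.antisymm
        · intro x hx
          have hx' : x ∈ V ∩ A := ⟨hx.2, hUA hx.1⟩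
          rw [hVA] at hx'; exact hx'
        · intro x hx
          rw [Set.mem_singleton_iff] at hx
          subst hx
          have haV : x ∈ V ∩ A := by rw [hVA]; exact rfl
          exact ⟨ha, haV.1⟩
      exact hcrowded a (hsingle ▸ hU.inter hV)
    exact isOpen_compl_iff.mp (hsub _ hdense)
  set D := ⋃ n, H n with hD
  have hDopen : IsOpen D := hsub _ hHdense
  have hDc_closed : IsClosed (Dᶜ) := by
    rw [isClosed_compl_iff]; exact hDopen
  have hDc_disc : IsDiscreteSet (Dᶜ) := by
    intro x hx
    refine ⟨D ∪ {x}, hsub _ (hHdense.mono Set.subset_union_left), ?_⟩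
    apply Set.Subset.antisymm
    · rintro y ⟨hy1 | hy1, hy2⟩
      · exact absurd hy1 hy2
      · exact hy1
    · rintro y rfl
      exact ⟨Or.inr rfl, hx⟩
  refine ⟨fun n => Nat.rec (Dᶜ) (fun k _ => H k) n, ?_, ?_, ?_⟩
  · rintro (_ | n)
    · exact hDc_closed
    · exact hclosed _ (hHdisc n)
  · rintro (_ | n)
    · exact hDc_disc
    · exact hHdisc n
  · ext x
    simp only [Set.mem_iUnion, Set.mem_univ, iff_true]
    by_cases hx : x ∈ D
    · obtain ⟨n, hn⟩ := Set.mem_iUnion.mp hx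
      exact ⟨n + 1, hn⟩
    · exact ⟨0, hx⟩
end

section
/- Every countable submaximal topological space is D-separable. -/
/-- The complement of a nowhere dense set is dense. -/
lemma aux_dense_compl {X : Type*} [TopologicalSpace X]
    {N : Set X} (hN : interior (closure N) = ∅) : Dense Nᶜ := by
  have h1 : Dense ((closure N)ᶜ) := by
    rw [dense_iff_closure_eq, closure_compl, hN, Set.compl_empty]
  exact h1.mono (Set.compl_subset_compl.2 subset_closure)

/-- A non-isolated singleton is nowhere dense in a submaximal space. -/
lemma aux_singleton_nwd {X : Type*} [TopologicalSpace X]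
    (hsub : ∀ D : Set X, Dense D → IsOpen D)
    {x : X} (hx : ¬ IsOpen ({x} : Set X)) : interior (closure ({x} : Set X)) = ∅ := by
  have hdense : Dense ({x}ᶜ : Set X) := by
    rw [dense_iff_inter_open]
    intro U hU hUne
    by_contra h
    push_neg at h
    have hUx : U = {x} := by
      apply Set.eq_singleton_iff_nonempty_unique_mem.2 ⟨hUne, ?_⟩
      intro y hy
      by_contra hne
      exact (Set.eq_empty_iff_forall_notMem.1 h y) ⟨hy, hne⟩
    exact hx (hUx ▸ hU)
  have hopen : IsOpen ({x}ᶜ : Set X) := hsub _ hdense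
  by_contra h
  obtain ⟨y, hy⟩ := Set.nonempty_iff_ne_empty.2 h
  set V := interior (closure ({x} : Set X)) with hVdef
  have hVo : IsOpen V := isOpen_interior
  have hVsub : V ⊆ closure {x} := interior_subset
  have hVx : V ∩ {x}ᶜ = ∅ := by
    by_contra hne
    obtain ⟨z, hzV, hzc⟩ := Set.nonempty_iff_ne_empty.2 hne
    have hz : z ∈ closure ({x} : Set X) := hVsub hzV
    rw [mem_closure_iff] at hz
    obtain ⟨w, hw1, hw2⟩ := hz (V ∩ {x}ᶜ) (hVo.inter hopen) ⟨hzV, hzc⟩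
    exact hw1.2 hw2
  have hVsing : V ⊆ {x} := by
    intro z hz
    by_contra hzx
    exact (Set.eq_empty_iff_forall_notMem.1 hVx z) ⟨hz, hzx⟩
  have hVeq : V = {x} :=
    Set.eq_singleton_iff_nonempty_unique_mem.2 ⟨⟨y, hy⟩, fun z hz => hVsing hz⟩
  exact hx (hVeq ▸ hVo)

/-- Nowhere dense sets are discrete in submaximal spaces. -/
lemma aux_nwd_discrete {X : Type*} [TopologicalSpace X]
    (hsub : ∀ D : Set X, Dense D → IsOpen D)
    {N : Set X} (hN : interior (closure N) = ∅) : IsDiscreteSet N := by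
  intro a ha
  refine ⟨Nᶜ ∪ {a}, hsub _ ((aux_dense_compl hN).mono Set.subset_union_left), ?_⟩
  ext z
  simp only [Set.mem_inter_iff, Set.mem_union, Set.mem_compl_iff, Set.mem_singleton_iff]
  constructor
  · rintro ⟨hc | he, hz⟩
    · exact absurd hz hc
    · exact he
  · rintro rfl; exact ⟨Or.inr rfl, ha⟩

/-- The union of two nowhere dense sets is nowhere dense. -/
lemma aux_nwd_union {X : Type*} [TopologicalSpace X]
    {A B : Set X} (hA : interior (closure A) = ∅) (hB : interior (closure B) = ∅) :
    interior (closure (A ∪ B)) = ∅ := by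
  rw [closure_union]
  rw [Set.eq_empty_iff_forall_notMem] at hA hB ⊢
  intro x hx
  set V := interior (closure A ∪ closure B) with hV
  have hVo : IsOpen V := isOpen_interior
  have hWo : IsOpen (V ∩ (closure A)ᶜ) := hVo.inter isClosed_closure.isOpen_compl
  have hWB : V ∩ (closure A)ᶜ ⊆ closure B := by
    intro z hz
    rcases interior_subset hz.1 with h | h
    · exact absurd h hz.2
    · exact h
  have hWint : V ∩ (closure A)ᶜ ⊆ interior (closure B) :=
    hWo.subset_interior_iff.2 hWB
  by_cases hxa : x ∈ closure A
  · have hVA : V ⊆ closure A := by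
      intro z hz
      by_contra hzc
      exact hB z (hWint ⟨hz, hzc⟩)
    exact hA x (hVo.subset_interior_iff.2 hVA hx)
  · exact hB x (hWint ⟨hx, hxa⟩)

/-- Every countable submaximal space is D-separable. -/
theorem dSeparable_of_countable_submaximal {X : Type*} [TopologicalSpace X]
    [Countable X] (hsub : ∀ D : Set X, Dense D → IsOpen D) :
    DSeparable X := by
  classical
  intro D hD
  obtain ⟨f, hf⟩ := Countable.exists_injective_nat X
  set I : Set X := {x | IsOpen ({x} : Set X)} with hI
  set W : Set X := (closure I)ᶜ with hW
  have hWopen : IsOpen W := isClosed_closure.isOpen_compl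
  -- finite intersections of the dense sets
  let G : ℕ → Set X := fun n => Nat.rec (D 0) (fun n Gn => Gn ∩ D (n + 1)) n
  have hG0 : G 0 = D 0 := rfl
  have hGsucc : ∀ n, G (n + 1) = G n ∩ D (n + 1) := fun n => rfl
  have hGdense : ∀ n, Dense (G n) := by
    intro n
    induction n with
    | zero => exact hD 0
    | succ n ih =>
      rw [hGsucc]
      exact ih.inter_of_isOpen_left (hD (n + 1)) (hsub _ ih)
  have hGopen : ∀ n, IsOpen (G n) := fun n => hsub _ (hGdense n)
  have hGD : ∀ n, G n ⊆ D n := by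
    intro n
    cases n with
    | zero => exact le_of_eq hG0
    | succ n => rw [hGsucc]; exact Set.inter_subset_right
  set K : Set X := ⋂ n, G n with hK
  have hKG : ∀ n, K ⊆ G n := fun n => Set.iInter_subset _ n
  -- the pieces
  set T : ℕ → Set X := fun n => {x | x ∈ K ∧ x ∈ W ∧ f x = n} with hT
  set M : ℕ → Set X := fun n => ((G n \ G (n + 1)) ∩ W) ∪ T n with hM
  set F : ℕ → Set X := fun n => (if n = 0 then I else ∅) ∪ M n with hF
  have hIW : ∀ {x : X}, x ∈ W → ¬ IsOpen ({x} : Set X) := by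
    intro x hx hxo
    exact hx (subset_closure hxo)
  have hMW : ∀ n, M n ⊆ W := by
    rintro n x (⟨_, hw⟩ | ⟨_, hw, _⟩) <;> exact hw
  -- each M n is nowhere dense
  have hMnwd : ∀ n, interior (closure (M n)) = ∅ := by
    intro n
    have h1 : interior (closure ((G n \ G (n + 1)) ∩ W)) = ∅ := by
      have hsubc : (G n \ G (n + 1)) ∩ W ⊆ (G (n + 1))ᶜ := fun x hx => hx.1.2
      have hc : closure ((G (n + 1))ᶜ : Set X) = (G (n + 1))ᶜ :=
        ((hGopen (n + 1)).isClosed_compl).closure_eq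
      have hic : interior ((G (n + 1))ᶜ : Set X) = ∅ := by
        rw [interior_compl, (hGdense (n + 1)).closure_eq, Set.compl_univ]
      apply Set.eq_empty_of_subset_empty
      calc interior (closure ((G n \ G (n + 1)) ∩ W))
          ⊆ interior (closure ((G (n + 1))ᶜ : Set X)) :=
            interior_mono (closure_mono hsubc)
        _ = ∅ := by rw [hc, hic]
    have h2 : interior (closure (T n)) = ∅ := by
      rcases Set.eq_empty_or_nonempty (T n) with he | ⟨x, hx⟩
      · simp [he]
      · have hTx : T n ⊆ {x} := by
          rintro y ⟨_, _, hy3⟩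
          have : f y = f x := by rw [hy3, hx.2.2]
          exact hf this
        have hxn : ¬ IsOpen ({x} : Set X) := hIW hx.2.1
        apply Set.eq_empty_of_subset_empty
        calc interior (closure (T n))
            ⊆ interior (closure ({x} : Set X)) := interior_mono (closure_mono hTx)
          _ = ∅ := aux_singleton_nwd hsub hxn
    exact aux_nwd_union h1 h2
  refine ⟨F, ?_, ?_, ?_⟩
  · -- F n ⊆ D n
    intro n x hx
    rcases hx with hx | hx
    · split at hx
      · next h0 =>
        subst h0
        have hxo : IsOpen ({x} : Set X) := hx
        obtain ⟨y, hy1, hy2⟩ := (hD 0).inter_open_nonempty {x} hxo ⟨x, rfl⟩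
        rcases hy1 with rfl
        exact hy2
      · exact absurd hx (Set.notMem_empty x)
    · rcases hx with ⟨⟨hx1, _⟩, _⟩ | ⟨hx1, _, _⟩
      · exact hGD n hx1
      · exact hGD n (hKG n hx1)
  · -- discreteness
    intro n a ha
    rcases ha with haI | haM
    · have hn0 : n = 0 := by
        by_contra h
        simp [h] at haI
      subst hn0
      simp only [if_pos rfl] at haI
      refine ⟨{a}, haI, ?_⟩
      apply Set.eq_singleton_iff_nonempty_unique_mem.2
      refine ⟨⟨a, rfl, Or.inl (by simpa using haI)⟩, ?_⟩
      rintro y ⟨rfl, _⟩; rfl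
    · obtain ⟨U, hUo, hU⟩ := aux_nwd_discrete hsub (hMnwd n) a haM
      refine ⟨U ∩ W, hUo.inter hWopen, ?_⟩
      apply Set.eq_singleton_iff_nonempty_unique_mem.2
      constructor
      · refine ⟨a, ⟨?_, hMW n haM⟩, Or.inr haM⟩
        have haU : a ∈ U ∩ M n := hU ▸ rfl
        exact haU.1
      · rintro y ⟨⟨hyU, hyW⟩, hyF⟩
        rcases hyF with hyI | hyM
        · exfalso
          split at hyI
          · exact hyW (subset_closure hyI)
          · exact hyI
        · have : y ∈ U ∩ M n := ⟨hyU, hyM⟩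
          rw [hU] at this
          exact this
  · -- density
    rw [dense_iff_inter_open]
    intro U hUo hUne
    obtain ⟨x, hx⟩ := hUne
    by_cases hxI : x ∈ closure I
    · rw [mem_closure_iff] at hxI
      obtain ⟨y, hyU, hyI⟩ := hxI U hUo hx
      exact ⟨y, hyU, Set.mem_iUnion.2 ⟨0, Or.inl (by simp [hyI])⟩⟩
    · have hsubU : G 0 ∩ W ⊆ ⋃ n, F n := by
        rintro y ⟨hyG, hyW⟩
        by_cases hyK : y ∈ K
        · exact Set.mem_iUnion.2 ⟨f y, Or.inr (Or.inr ⟨hyK, hyW, rfl⟩)⟩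
        · have hex : ∃ m, y ∉ G m := by
            by_contra hcon
            push_neg at hcon
            exact hyK (Set.mem_iInter.2 hcon)
          haveI : DecidablePred fun m => y ∉ G m := fun _ => Classical.dec _
          have hm : y ∉ G (Nat.find hex) := Nat.find_spec hex
          have hm0 : Nat.find hex ≠ 0 := by
            intro h0
            rw [h0] at hm
            exact hm hyG
          obtain ⟨k, hk⟩ := Nat.exists_eq_succ_of_ne_zero hm0
          have hyk : y ∈ G k := by
            by_contra hyk'
            have hle : Nat.find hex ≤ k := Nat.find_le hyk'
            omega
          rw [hk] at hm
          exact Set.mem_iUnion.2 ⟨k, Or.inr (Or.inl ⟨⟨hyk, hm⟩, hyW⟩)⟩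
      have hUW : (U ∩ W).Nonempty := ⟨x, hx, hxI⟩
      obtain ⟨y, hy1, hy2⟩ :=
        (hGdense 0).inter_open_nonempty (U ∩ W) (hUo.inter hWopen) hUW
      exact ⟨y, hy1.1, hsubU ⟨hy2, hy1.2⟩⟩
end

section
/- For any cardinal κ, the countable power D(κ)^ℕ of the discrete space D(κ) of cardinality κ is D-separable. -/
/-- The countable power of any discrete space is D-separable. -/
theorem dSeparable_pow_of_discrete (K : Type*) [TopologicalSpace K]
    [DiscreteTopology K] : DSeparable (ℕ → K) := by
  intro D hD
  by_cases hK : Nonempty K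
  · -- cylinders determined by finite initial segments
    set C : ∀ n : ℕ, (Fin n → K) → Set (ℕ → K) :=
      fun n s => {f | ∀ i : Fin n, f i = s i} with hC
    have hCopen : ∀ n s, IsOpen (C n s) := by
      intro n s
      have : C n s = ⋂ i : Fin n, (fun f : ℕ → K => f i) ⁻¹' {s i} := by
        ext f; simp [hC]
      rw [this]
      exact isOpen_iInter_of_finite fun i =>
        (continuous_apply (i : ℕ)).isOpen_preimage _ (isOpen_discrete _)
    have hCne : ∀ n (s : Fin n → K), (C n s).Nonempty := by
      intro n s
      obtain ⟨k⟩ := hK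
      refine ⟨fun i => if h : i < n then s ⟨i, h⟩ else k, ?_⟩
      intro i; simp [hC, i.isLt]
    have hmem : ∀ n (s : Fin n → K), ∃ p, p ∈ D n ∧ p ∈ C n s := by
      intro n s
      obtain ⟨p, hp1, hp2⟩ := (hD n).exists_mem_open (hCopen n s) (hCne n s)
      exact ⟨p, hp1, hp2⟩
    choose p hp1 hp2 using hmem
    refine ⟨fun n => Set.range (p n), ?_, ?_, ?_⟩
    · rintro n _ ⟨s, rfl⟩; exact hp1 n s
    · rintro n _ ⟨s, rfl⟩
      refine ⟨C n s, hCopen n s, ?_⟩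
      ext f
      constructor
      · rintro ⟨hfC, t, rfl⟩
        have hts : t = s := by
          funext i
          have h1 := hp2 n t i
          have h2 := hfC i
          rw [h1] at h2; exact h2
        simp [hts]
      · rintro rfl
        exact ⟨hp2 n s, s, rfl⟩
    · rw [dense_iff_inter_open]
      rintro U hU ⟨f, hf⟩
      obtain ⟨I, u, hu, hsub⟩ := isOpen_pi_iff.mp hU f hf
      set n : ℕ := I.sup id + 1 with hn
      set s : Fin n → K := fun i => f i with hs
      have hlt : ∀ i ∈ I, i < n := fun i hi =>
        Nat.lt_succ_of_le (Finset.le_sup (f := id) hi)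
      have hpU : p n s ∈ U := by
        apply hsub
        intro i hi
        have h1 : p n s i = f i := by
          have := hp2 n s ⟨i, hlt i hi⟩
          simpa [hs] using this
        rw [h1]
        exact (hu i hi).2
      exact ⟨p n s, hpU, Set.mem_iUnion.mpr ⟨n, s, rfl⟩⟩
  · -- K empty, so ℕ → K is empty and everything is trivially dense
    have : IsEmpty (ℕ → K) := ⟨fun f => hK ⟨f 0⟩⟩
    refine ⟨fun _ => ∅, fun n => by simp, fun n => by intro a ha; simp at ha, ?_⟩
    rw [dense_iff_inter_open]
    rintro U hU ⟨f, _⟩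
    exact (this.false f).elim
end

section
/- Let X be a D-separable topological space and let Y be a topological space with a σ-disjoint π-base. Then the product X × Y is D-separable. -/
/-- If `X` is D-separable and `Y` has a σ-disjoint π-base, then `X × Y`
is D-separable. -/
theorem dSeparable_prod {X Y : Type*} [TopologicalSpace X] [TopologicalSpace Y]
    (hX : DSeparable X) (B : ℕ → Set (Set Y))
    (hdisj : ∀ n, (B n).Pairwise Disjoint) (hpi : IsPiBase Y (⋃ n, B n)) :
    DSeparable (X × Y) := by
  classical
  intro D hD
  set e : ℕ × ℕ ≃ ℕ := Nat.pairEquiv with he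
  have key : ∀ n : ℕ, ∀ P ∈ B n, ∃ G : ℕ → Set X,
      (∀ i, IsDiscreteSet (G i)) ∧ Dense (⋃ i, G i) ∧
      ∀ i, ∀ x ∈ G i, ∃ y ∈ P, (x, y) ∈ D (e (i, n)) := by
    intro n P hP
    obtain ⟨hPo, hPne⟩ := hpi.1 P (Set.mem_iUnion.2 ⟨n, hP⟩)
    have hEdense : ∀ i, Dense {x : X | ∃ y ∈ P, (x, y) ∈ D (e (i, n))} := by
      intro i
      rw [dense_iff_inter_open]
      intro U hU hUne
      have : ((U ×ˢ P) ∩ D (e (i, n))).Nonempty :=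
        dense_iff_inter_open.1 (hD _) _ (hU.prod hPo) (hUne.prod hPne)
      obtain ⟨⟨x, y⟩, ⟨hxU, hyP⟩, hmem⟩ := this
      exact ⟨x, hxU, y, hyP, hmem⟩
    obtain ⟨G, hGsub, hGdisc, hGdense⟩ := hX _ hEdense
    exact ⟨G, hGdisc, hGdense, fun i x hx => hGsub i hx⟩
  choose G hGdisc hGdense hGw using key
  choose w hwP hwD using hGw
  refine ⟨fun j => {z : X × Y | ∃ P, ∃ hP : P ∈ B (e.symm j).2,
      ∃ hx : z.1 ∈ G (e.symm j).2 P hP (e.symm j).1,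
      z.2 = w (e.symm j).2 P hP (e.symm j).1 z.1 hx}, ?_, ?_, ?_⟩
  · intro j z hz
    obtain ⟨P, hP, hx, hz2⟩ := hz
    have h := hwD (e.symm j).2 P hP (e.symm j).1 z.1 hx
    rw [← hz2] at h
    simpa using h
  · intro j
    rintro ⟨a, b⟩ ⟨P, hP, hx, hb⟩
    obtain ⟨U, hU, hUG⟩ := hGdisc (e.symm j).2 P hP (e.symm j).1 a hx
    obtain ⟨hPo, hPne⟩ := hpi.1 P (Set.mem_iUnion.2 ⟨(e.symm j).2, hP⟩)
    refine ⟨U ×ˢ P, hU.prod hPo, ?_⟩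
    ext ⟨c, d⟩
    constructor
    · rintro ⟨⟨hcU, hdP⟩, P', hP', hc', hd⟩
      have hPP' : P' = P := by
        by_contra hne
        have hdis := hdisj (e.symm j).2 hP' hP hne
        have hd2 : d = w (e.symm j).2 P' hP' (e.symm j).1 c hc' := hd
        have hdP' : d ∈ P' := hd2 ▸ hwP _ _ _ _ _ hc'
        exact (Set.disjoint_left.1 hdis hdP') hdP
      subst hPP'
      have hc'' : c ∈ G (e.symm j).2 P' hP (e.symm j).1 := hc'
      have hca : c ∈ ({a} : Set X) := by rw [← hUG]; exact ⟨hcU, hc''⟩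
      rw [Set.mem_singleton_iff] at hca
      subst hca
      have hd2 : d = w (e.symm j).2 P' hP (e.symm j).1 c hc' := hd
      have hb2 : b = w (e.symm j).2 P' hP (e.symm j).1 c hx := hb
      have hdb : d = b := hd2.trans hb2.symm
      subst hdb
      rfl
    · rintro h
      rw [Set.mem_singleton_iff] at h
      rw [h]
      have haU : a ∈ U ∩ G (e.symm j).2 P hP (e.symm j).1 := by
        rw [hUG]; rfl
      exact ⟨⟨haU.1, hb ▸ hwP _ _ _ _ _ hx⟩, P, hP, hx, hb⟩
  · rw [dense_iff_inter_open]
    intro W hW hWne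
    obtain ⟨z, hz⟩ := hWne
    obtain ⟨U, V, hU, hV, hzU, hzV, hUV⟩ := isOpen_prod_iff.1 hW z.1 z.2 (by simpa using hz)
    obtain ⟨P, hPmem, hPV⟩ := hpi.2 V hV ⟨z.2, hzV⟩
    obtain ⟨n, hP⟩ := Set.mem_iUnion.1 hPmem
    obtain ⟨x, hxU, hxG⟩ := dense_iff_inter_open.1 (hGdense n P hP) U hU ⟨z.1, hzU⟩
    obtain ⟨i, hxGi⟩ := Set.mem_iUnion.1 hxG
    refine ⟨(x, w n P hP i x hxGi),
      hUV ⟨hxU, hPV (hwP n P hP i x hxGi)⟩, Set.mem_iUnion.2 ⟨e (i, n), ?_⟩⟩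
    have h1 : e.symm (e (i, n)) = (i, n) := e.symm_apply_apply _
    rw [h1]
    exact ⟨P, hP, hxGi, rfl⟩
end

section
/- A separable topological space X is selectively separable if and only if for every point p ∈ X and every sequence (D_n : n ∈ ℕ) of dense subsets of X one can pick finite sets F_n ⊆ D_n such that p belongs to the closure of ⋃_n F_n. -/
/-- `X` is selectively separable. -/
def SelectivelySeparable (X : Type*) [TopologicalSpace X] : Prop :=
  ∀ D : ℕ → Set X, (∀ n, Dense (D n)) →
    ∃ F : ℕ → Set X, (∀ n, F n ⊆ D n) ∧ (∀ n, (F n).Finite) ∧ Dense (⋃ n, F n)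

/-- A separable space is selectively separable iff it has countable tightness
with respect to dense sets: for each point `p` and each sequence of dense sets
one can pick finite subsets whose union has `p` in its closure. -/
theorem selectivelySeparable_iff_pointwise {X : Type*} [TopologicalSpace X]
    [TopologicalSpace.SeparableSpace X] :
    SelectivelySeparable X ↔
      ∀ (p : X) (D : ℕ → Set X), (∀ n, Dense (D n)) →
        ∃ F : ℕ → Set X, (∀ n, F n ⊆ D n) ∧ (∀ n, (F n).Finite) ∧
          p ∈ closure (⋃ n, F n) := by
  constructor
  · intro h p D hD
    obtain ⟨F, h1, h2, h3⟩ := h D hD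
    exact ⟨F, h1, h2, h3 p⟩
  · intro H D hD
    rcases isEmpty_or_nonempty X with he | hne
    · exact ⟨fun _ => ∅, fun n => (Set.empty_subset _), fun n => Set.finite_empty,
        fun x => (he.false x).elim⟩
    · obtain ⟨u, hu⟩ := TopologicalSpace.exists_dense_seq X
      choose F hF1 hF2 hF3 using fun k =>
        H (u k) (fun n => D (Nat.pair k n)) (fun n => hD _)
      refine ⟨fun (m : ℕ) => F m.unpair.1 m.unpair.2, fun m => ?_, fun m => hF2 _ _, ?_⟩
      · have := hF1 m.unpair.1 m.unpair.2
        rwa [Nat.pair_unpair] at this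
      · have hsub : ∀ k, (⋃ n, F k n) ⊆ ⋃ m : ℕ, F m.unpair.1 m.unpair.2 := by
          intro k x hx
          obtain ⟨s, ⟨n, rfl⟩, hxs⟩ := hx
          exact Set.mem_iUnion.2 ⟨Nat.pair k n, by simp [Nat.unpair_pair, hxs]⟩
        have hrange : Set.range u ⊆ closure (⋃ m : ℕ, F m.unpair.1 m.unpair.2) := by
          rintro _ ⟨k, rfl⟩
          exact closure_mono (hsub k) (hF3 k)
        exact fun x => (closure_minimal hrange isClosed_closure)
          (by rw [hu.closure_range]; trivial)
end
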